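/- arXiv:2110.02946 — 3 statements merged into one kernel-verified Lean document; each statement's English description precedes it below -/
import Mathlib

section
/- Fix 0 ≤ μ₀ < 1 and γ > 0, and positive parameters d, α, β. Then there exists σ₀ > 0 such that for all σ > σ₀ and all 0 ≤ μ < μ₀, the only solutions (u,v) ∈ ℝ² of the system { α·u(1−u²) + β·v = 0, v(μ − σv²) − γ·v(1−u) − v = 0 } are (u,v) ∈ {(−1,0), (0,0), (1,0)}. -/
open Real Set

/-- The coupled KPP–Swift–Hohenberg system has only the three trivial constant
steady states `(±1,0)` and `(0,0)` once `σ` is large enough. -/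
theorem stmt_7 (μ₀ γ d α β : ℝ) (hμ₀ : 0 ≤ μ₀) (hμ₀' : μ₀ < 1) (hγ : 0 < γ)
    (hd : 0 < d) (hα : 0 < α) (hβ : 0 < β) :
    ∃ σ₀ : ℝ, 0 < σ₀ ∧ ∀ σ : ℝ, σ₀ < σ → ∀ μ : ℝ, 0 ≤ μ → μ < μ₀ →
      ∀ u v : ℝ,
        (α * u * (1 - u ^ 2) + β * v = 0 ∧
         v * (μ - σ * v ^ 2) - γ * v * (1 - u) - v = 0) →
        ((u, v) = ((-1 : ℝ), (0 : ℝ)) ∨ (u, v) = ((0 : ℝ), (0 : ℝ)) ∨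
          (u, v) = ((1 : ℝ), (0 : ℝ))) := by
  have h1μ : 0 < 1 - μ₀ := by linarith
  refine ⟨(β * γ) ^ 2 / (16 * α ^ 2 * (1 - μ₀)), by positivity, ?_⟩
  intro σ hσ μ hμ hμ' u v ⟨h1, h2⟩
  have hσ0 : 0 < σ := lt_of_le_of_lt (by positivity) hσ
  have hdisc : (β * γ) ^ 2 < 16 * α ^ 2 * (1 - μ₀) * σ := by
    have := (div_lt_iff₀ (by positivity : (0:ℝ) < 16 * α ^ 2 * (1 - μ₀))).mp hσ
    linarith
  have hv : v = 0 := by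
    by_contra hv
    have h2' : μ - σ * v ^ 2 - γ * (1 - u) - 1 = 0 := by
      have : v * (μ - σ * v ^ 2 - γ * (1 - u) - 1) = 0 := by ring_nf; ring_nf at h2; linarith
      rcases mul_eq_zero.mp this with h | h
      · exact absurd h hv
      · exact h
    have hv2 : 0 < v ^ 2 := by positivity
    have hu1 : 1 < u := by nlinarith
    have hcube : 0 < u * (u ^ 2 - 1) := by nlinarith
    have hvpos : 0 < v := by nlinarith [mul_pos hα hcube]
    have hbv : 2 * α * (u - 1) ≤ β * v := by
      nlinarith [mul_nonneg (show (0:ℝ) ≤ u * (u + 1) - 2 by nlinarith)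
        (show (0:ℝ) ≤ u - 1 by linarith), mul_pos hα (show (0:ℝ) < u - 1 by linarith)]
    have h2'' : γ * (u - 1) = 1 - μ + σ * v ^ 2 := by linarith
    have key : 2 * α * (1 - μ + σ * v ^ 2) ≤ β * γ * v := by
      calc 2 * α * (1 - μ + σ * v ^ 2) = 2 * α * (γ * (u - 1)) := by rw [h2'']
        _ = γ * (2 * α * (u - 1)) := by ring
        _ ≤ γ * (β * v) := mul_le_mul_of_nonneg_left hbv hγ.le
        _ = β * γ * v := by ring
    nlinarith [sq_nonneg (4 * α * σ * v - β * γ),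
      mul_le_mul_of_nonneg_left key (show (0:ℝ) ≤ 8 * α * σ by positivity),
      mul_nonneg (mul_nonneg (mul_pos hα hσ0).le (show (0:ℝ) ≤ μ₀ - μ by linarith)) hα.le]
  subst hv
  have hu : u * (1 - u) * (1 + u) = 0 := by
    have : α * (u * (1 - u) * (1 + u)) = 0 := by ring_nf; ring_nf at h1; linarith
    rcases mul_eq_zero.mp this with h | h
    · linarith
    · exact h
  rcases mul_eq_zero.mp hu with h | h
  · rcases mul_eq_zero.mp h with h | h
    · right; left; simp [h]
    · right; right; simp [show u = 1 by linarith]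
  · left; simp [show u = -1 by linarith]
end

section
/- Let d, α, μ₀ > 0 with c₊ = 2√(dα), and set γ_rem = 8(α/d)² + 4(α/d) − 2α + μ₀. Then for all μ ∈ [0, μ₀], γ > γ_rem, and ξ ∈ ℝ, Re(−((−c₊/(2d)+iξ)²+1)² + c₊(−c₊/(2d)+iξ) + μ − γ) ≤ γ_rem − γ < 0. -/
open Real Complex

lemma re_calc_stmt11 (x ξ c μ γ : ℝ) :
    (-((((x:ℂ)+ξ*Complex.I)^2+1)^2) + (c:ℂ)*((x:ℂ)+ξ*Complex.I) + (μ:ℂ) - (γ:ℂ)).re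
      = -(x^2-ξ^2+1)^2 + 4*x^2*ξ^2 + c*x + μ - γ := by
  simp [pow_two, Complex.mul_re, Complex.add_re, Complex.add_im, Complex.mul_im]
  ring

/-- Stabilization of the SH Fredholm border at `+∞` by the critical KPP weight:
with `c₊ = 2√(dα)` and `γ_rem = 8(α/d)² + 4(α/d) − 2α + μ₀`, for `μ ∈ [0, μ₀]`,
`γ > γ_rem` and every `ξ`, the symbol real part is `≤ γ_rem − γ < 0`. -/
theorem stmt_11 (d α μ₀ : ℝ) (hd : 0 < d) (hα : 0 < α) (hμ₀ : 0 < μ₀) :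
    let c : ℝ := 2 * Real.sqrt (d * α)
    let γrem : ℝ := 8 * (α / d) ^ 2 + 4 * (α / d) - 2 * α + μ₀
    ∀ μ : ℝ, 0 ≤ μ → μ ≤ μ₀ → ∀ γ : ℝ, γrem < γ → ∀ ξ : ℝ,
      (-(((((-c / (2 * d) : ℝ) : ℂ) + ξ * Complex.I) ^ 2 + 1) ^ 2) +
          (c : ℂ) * (((-c / (2 * d) : ℝ) : ℂ) + ξ * Complex.I) + (μ : ℂ) - (γ : ℂ)).re
        ≤ γrem - γ ∧ γrem - γ < 0 := by
  intro c γrem μ hμ0 hμ γ hγ ξ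
  have hc2 : c ^ 2 = 4 * (d * α) := by
    have : Real.sqrt (d * α) ^ 2 = d * α :=
      Real.sq_sqrt (le_of_lt (mul_pos hd hα))
    simp only [c]; nlinarith [this]
  set x : ℝ := -c / (2 * d) with hx
  have hxsq : x ^ 2 = α / d := by
    rw [hx]; field_simp
    nlinarith [hc2]
  have hcx : c * x = -2 * α := by
    rw [hx]; field_simp
    nlinarith [hc2]
  rw [re_calc_stmt11]
  constructor
  · have key : -(x^2-ξ^2+1)^2 + 4*x^2*ξ^2 ≤ 8*(x^2)^2 + 4*x^2 := by
      nlinarith [sq_nonneg (ξ^2 - (1 + 3*x^2)), sq_nonneg ξ, sq_nonneg x]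
    have : γrem = 8*(x^2)^2 + 4*x^2 - 2*α + μ₀ := by rw [hxsq]
    rw [this]
    nlinarith [key]
  · linarith
end

section
/- Let d, α, β, σ > 0 with β small enough (or σ large enough), and let γ_rem = 8(α/d)² + 4(α/d) − 2α + μ₀ (for fixed small μ₀ > 0) and γ_GL as above. Then there is a nonempty open set Ω of parameters (α, β, d, σ) for which γ_rem < γ_GL; in particular the interval (γ_rem, γ_GL) is nonempty and for γ in this interval both the weighted-spectrum stability condition and the supercriticality condition P(γ) < 0 hold. -/
open Real Filter Set

/-- The coefficient `a` in the Ginzburg–Landau cubic coefficient. -/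
noncomputable def aGL (α d : ℝ) : ℝ :=
  19 / 9 + (d + 2 * α) * (1 / α + 1 / (9 * (4 * d + 2 * α)))

/-- The Ginzburg–Landau cubic coefficient, as a quadratic polynomial in `γ`. -/
noncomputable def Pgl (α β d σ γ : ℝ) : ℝ :=
  aGL α d * β ^ 2 * γ ^ 2 - 3 * β ^ 2 * (1 + α / (4 * d + 2 * α)) * γ -
    3 * σ * (d + 2 * α) ^ 2

/-- The positive root `γ_GL` of `P`. -/
noncomputable def gammaGL (α β d σ : ℝ) : ℝ :=
  3 * (4 * d + 3 * α) / (2 * aGL α d * (4 * d + 2 * α)) +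
    Real.sqrt ((3 * (4 * d + 3 * α) / (2 * aGL α d * (4 * d + 2 * α))) ^ 2 +
      3 * σ * (d + 2 * α) ^ 2 / (aGL α d * β ^ 2))

/-- The remnant-instability threshold `γ_rem = 8(α/d)² + 4(α/d) − 2α + μ₀`. -/
noncomputable def gammaRem (α d μ₀ : ℝ) : ℝ :=
  8 * (α / d) ^ 2 + 4 * (α / d) - 2 * α + μ₀

lemma aGL_pos {α d : ℝ} (hα : 0 < α) (hd : 0 < d) : 0 < aGL α d := by
  have h1 : 0 < 1/α := by positivity
  have h2 : 0 < 1 / (9 * (4 * d + 2 * α)) := by positivity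
  have : 0 < d + 2*α := by linarith
  unfold aGL; positivity

/-- Factorization of `P` in terms of the vertex of the parabola. -/
lemma Pgl_eq {α β d σ : ℝ} (hα : 0 < α) (hβ : 0 < β) (hd : 0 < d) (γ : ℝ) :
    Pgl α β d σ γ = aGL α d * β ^ 2 *
      ((γ - 3 * (4 * d + 3 * α) / (2 * aGL α d * (4 * d + 2 * α))) ^ 2 -
       ((3 * (4 * d + 3 * α) / (2 * aGL α d * (4 * d + 2 * α))) ^ 2 +
         3 * σ * (d + 2 * α) ^ 2 / (aGL α d * β ^ 2))) := by
  have hA := (aGL_pos hα hd).ne'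
  have h1 : (4 * d + 2 * α) ≠ 0 := by positivity
  have hβ' : β ≠ 0 := hβ.ne'
  unfold Pgl
  field_simp
  ring

lemma Pgl_gammaGL {α β d σ : ℝ} (hα : 0 < α) (hβ : 0 < β) (hd : 0 < d) (hσ : 0 < σ) :
    Pgl α β d σ (gammaGL α β d σ) = 0 := by
  have hA := aGL_pos hα hd
  rw [Pgl_eq hα hβ hd]
  rw [gammaGL]
  rw [add_sub_cancel_left, sq_sqrt (by positivity)]
  ring

lemma lt_gammaGL_of_Pgl_neg {α β d σ x : ℝ} (hα : 0 < α) (hβ : 0 < β) (hd : 0 < d)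
    (hσ : 0 < σ) (hx : Pgl α β d σ x < 0) : x < gammaGL α β d σ := by
  have hA := aGL_pos hα hd
  rw [Pgl_eq hα hβ hd] at hx
  set B := 3 * (4 * d + 3 * α) / (2 * aGL α d * (4 * d + 2 * α)) with hB
  set C := B ^ 2 + 3 * σ * (d + 2 * α) ^ 2 / (aGL α d * β ^ 2) with hC
  have hC0 : 0 ≤ C := by rw [hC]; positivity
  have h1 : (x - B) ^ 2 < C := by
    nlinarith [sq_nonneg β, mul_pos hA (mul_pos hβ hβ)]
  have h2 : x - B < Real.sqrt C := by
    calc x - B ≤ |x - B| := le_abs_self _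
    _ = Real.sqrt ((x - B) ^ 2) := (Real.sqrt_sq_eq_abs _).symm
    _ < Real.sqrt C := Real.sqrt_lt_sqrt (sq_nonneg _) h1
  have : gammaGL α β d σ = B + Real.sqrt C := rfl
  rw [this]; linarith

/-- Strict convexity of the quadratic: negativity propagates to the interior. -/
lemma Pgl_neg_of_mem {α β d σ x γ : ℝ} (hα : 0 < α) (hβ : 0 < β) (hd : 0 < d)
    (hσ : 0 < σ) (hx : Pgl α β d σ x < 0) (h1 : x < γ) (h2 : γ < gammaGL α β d σ) :
    Pgl α β d σ γ < 0 := by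
  have hA := aGL_pos hα hd
  have hg := Pgl_gammaGL hα hβ hd hσ (α := α) (β := β) (d := d) (σ := σ)
  set y := gammaGL α β d σ
  have hAb : 0 < aGL α d * β ^ 2 := by positivity
  have key : (y - γ) * Pgl α β d σ x + (γ - x) * Pgl α β d σ y - (y - x) * Pgl α β d σ γ
      = aGL α d * β ^ 2 * (y - γ) * (γ - x) * (y - x) := by
    unfold Pgl; ring
  nlinarith [mul_pos (mul_pos (mul_pos hAb (by linarith : (0:ℝ) < y - γ))
      (by linarith : (0:ℝ) < γ - x)) (by linarith : (0:ℝ) < y - x),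
    mul_pos (by linarith : (0:ℝ) < y - γ) (neg_pos.mpr hx)]

/-- Compatibility of the parameter constraints: for any fixed `μ₀ > 0` there is a
nonempty open set `Ω` of parameters `(α, β, d, σ)` (all positive) with
`γ_rem < γ_GL`; for `γ` in the nonempty interval `(γ_rem, γ_GL)`, both `γ_rem < γ`
(weighted spectral stability) and `P(γ) < 0` (supercriticality) hold. -/
theorem stmt_19 (μ₀ : ℝ) (hμ₀ : 0 < μ₀) :
    ∃ Ω : Set (ℝ × ℝ × ℝ × ℝ), IsOpen Ω ∧ Ω.Nonempty ∧
      ∀ p ∈ Ω, ∀ α β d σ : ℝ, p = (α, β, d, σ) →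
        0 < α ∧ 0 < β ∧ 0 < d ∧ 0 < σ ∧
        gammaRem α d μ₀ < gammaGL α β d σ ∧
        ∀ γ ∈ Set.Ioo (gammaRem α d μ₀) (gammaGL α β d σ),
          gammaRem α d μ₀ < γ ∧ Pgl α β d σ γ < 0 := by
  set U : Set (ℝ × ℝ × ℝ × ℝ) :=
    {p | 0 < p.1 ∧ 0 < p.2.1 ∧ 0 < p.2.2.1 ∧ 0 < p.2.2.2} with hU
  have hUopen : IsOpen U := by
    have : U = ((fun p : ℝ × ℝ × ℝ × ℝ => p.1) ⁻¹' Set.Ioi 0) ∩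
        ((fun p : ℝ × ℝ × ℝ × ℝ => p.2.1) ⁻¹' Set.Ioi 0) ∩
        ((fun p : ℝ × ℝ × ℝ × ℝ => p.2.2.1) ⁻¹' Set.Ioi 0) ∩
        ((fun p : ℝ × ℝ × ℝ × ℝ => p.2.2.2) ⁻¹' Set.Ioi 0) := by
      ext p; simp [hU, Set.mem_setOf_eq, and_assoc]
    rw [this]
    exact (((isOpen_Ioi.preimage (by fun_prop)).inter
        (isOpen_Ioi.preimage (by fun_prop))).inter
        (isOpen_Ioi.preimage (by fun_prop))).inter
        (isOpen_Ioi.preimage (by fun_prop))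
  have hcont : ContinuousOn (fun p : ℝ × ℝ × ℝ × ℝ =>
      Pgl p.1 p.2.1 p.2.2.1 p.2.2.2 (gammaRem p.1 p.2.2.1 μ₀)) U := by
    unfold Pgl aGL gammaRem
    fun_prop (disch := intros p hp; obtain ⟨h1, h2, h3, h4⟩ := hp; positivity)
  refine ⟨U ∩ (fun p : ℝ × ℝ × ℝ × ℝ =>
      Pgl p.1 p.2.1 p.2.2.1 p.2.2.2 (gammaRem p.1 p.2.2.1 μ₀)) ⁻¹' Set.Iio 0,
    hcont.isOpen_inter_preimage hUopen isOpen_Iio, ⟨(1, 1, 1, (10 + μ₀) ^ 2), ?_⟩, ?_⟩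
  · constructor
    · refine ⟨by norm_num, by norm_num, by norm_num, by positivity⟩
    · show Pgl 1 1 1 ((10 + μ₀) ^ 2) (gammaRem 1 1 μ₀) < 0
      have hg : gammaRem 1 1 μ₀ = 10 + μ₀ := by unfold gammaRem; norm_num
      have ha : aGL 1 1 = 19 / 9 + 3 * (1 + 1 / 54) := by unfold aGL; norm_num
      rw [hg]
      unfold Pgl
      rw [ha]
      nlinarith [sq_nonneg (10 + μ₀), hμ₀]
  · rintro p ⟨hpU, hpP⟩ α β d σ rfl
    obtain ⟨hα, hβ, hd, hσ⟩ := hpU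
    simp only [Set.mem_preimage, Set.mem_Iio] at hpP
    have hP : Pgl α β d σ (gammaRem α d μ₀) < 0 := hpP
    have hlt := lt_gammaGL_of_Pgl_neg hα hβ hd hσ hP
    exact ⟨hα, hβ, hd, hσ, hlt, fun γ hγ =>
      ⟨hγ.1, Pgl_neg_of_mem hα hβ hd hσ hP hγ.1 hγ.2⟩⟩
end
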